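/- Suppose |ρ₁| + |ρ₂| < 1 and define for k ≥ 2 the scalar a_k = ∑_{h=⌈k/2⌉}^{k} C(h, k−h) |ρ₁|^{2h−k} |ρ₂|^{k−h}, where C(h, k−h) is the binomial coefficient 'h choose k−h'. Then a_k ≤ (|ρ₁| + |ρ₂|)^{⌈k/2⌉} for all k ≥ 2. -/
import Mathlib

noncomputable def Tsum (x y : ℝ) (k : ℕ) : ℝ :=
  ∑ j ∈ Finset.range (k + 1), (Nat.choose (k - j) j : ℝ) * x ^ (k - 2 * j) * y ^ j

lemma Tsum_zero (x y : ℝ) : Tsum x y 0 = 1 := by simp [Tsum]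

lemma Tsum_one (x y : ℝ) : Tsum x y 1 = x := by
  simp [Tsum, Finset.sum_range_succ]

lemma Tsum_rec (x y : ℝ) (k : ℕ) :
    Tsum x y (k + 2) = x * Tsum x y (k + 1) + y * Tsum x y k := by
  have hT2 : Tsum x y (k + 2) = x ^ (k + 2) +
      ∑ i ∈ Finset.range (k + 1), (Nat.choose (k + 1 - i) (i + 1) : ℝ) * x ^ (k - 2 * i) * y ^ (i + 1) := by
    unfold Tsum
    rw [show k + 2 + 1 = (k + 2) + 1 from rfl, Finset.sum_range_succ]
    have hz : Nat.choose (k + 2 - (k + 2)) (k + 2) = 0 := by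
      simp [Nat.choose_eq_zero_of_lt]
    rw [hz]
    rw [Finset.sum_range_succ']
    simp only [Nat.cast_zero, zero_mul, add_zero]
    have : ∀ i ∈ Finset.range (k + 1),
        (Nat.choose (k + 2 - (i + 1)) (i + 1) : ℝ) * x ^ (k + 2 - 2 * (i + 1)) * y ^ (i + 1)
        = (Nat.choose (k + 1 - i) (i + 1) : ℝ) * x ^ (k - 2 * i) * y ^ (i + 1) := by
      intro i hi
      have e1 : k + 2 - (i + 1) = k + 1 - i := by omega
      have e2 : k + 2 - 2 * (i + 1) = k - 2 * i := by omega
      rw [e1, e2]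
    rw [Finset.sum_congr rfl this]
    simp [Nat.choose_zero_right]
    ring
  have hx1 : x * Tsum x y (k + 1) = x ^ (k + 2) +
      ∑ i ∈ Finset.range (k + 1), (Nat.choose (k - i) (i + 1) : ℝ) * x ^ (k - 2 * i) * y ^ (i + 1) := by
    unfold Tsum
    rw [Finset.mul_sum]
    have h1 : ∀ j ∈ Finset.range (k + 2),
        x * ((Nat.choose (k + 1 - j) j : ℝ) * x ^ (k + 1 - 2 * j) * y ^ j)
        = (Nat.choose (k + 1 - j) j : ℝ) * x ^ (k + 2 - 2 * j) * y ^ j := by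
      intro j hj
      rcases le_or_gt (2 * j) (k + 1) with hle | hlt
      · have : k + 2 - 2 * j = (k + 1 - 2 * j) + 1 := by omega
        rw [this, pow_succ]; ring
      · have : Nat.choose (k + 1 - j) j = 0 := Nat.choose_eq_zero_of_lt (by omega)
        simp [this]
    rw [Finset.sum_congr rfl h1, Finset.sum_range_succ']
    have : ∀ i ∈ Finset.range (k + 1),
        (Nat.choose (k + 1 - (i + 1)) (i + 1) : ℝ) * x ^ (k + 2 - 2 * (i + 1)) * y ^ (i + 1)
        = (Nat.choose (k - i) (i + 1) : ℝ) * x ^ (k - 2 * i) * y ^ (i + 1) := by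
      intro i hi
      have e1 : k + 1 - (i + 1) = k - i := by omega
      have e2 : k + 2 - 2 * (i + 1) = k - 2 * i := by omega
      rw [e1, e2]
    rw [Finset.sum_congr rfl this]
    simp [Nat.choose_zero_right]
    ring
  have hy1 : y * Tsum x y k =
      ∑ i ∈ Finset.range (k + 1), (Nat.choose (k - i) i : ℝ) * x ^ (k - 2 * i) * y ^ (i + 1) := by
    unfold Tsum
    rw [Finset.mul_sum]
    apply Finset.sum_congr rfl
    intro i hi
    rw [pow_succ]; ring
  rw [hT2, hx1, hy1, add_assoc, ← Finset.sum_add_distrib]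
  congr 1
  apply Finset.sum_congr rfl
  intro i hi
  simp only [Finset.mem_range] at hi
  have e : k + 1 - i = (k - i) + 1 := by omega
  rw [e, Nat.choose_succ_succ (k - i) i]
  push_cast
  ring

lemma Tsum_bound (x y : ℝ) (hx : 0 ≤ x) (hy : 0 ≤ y) (hs : x + y ≤ 1) :
    ∀ k, Tsum x y k ≤ (x + y) ^ ((k + 1) / 2) := by
  have hs0 : 0 ≤ x + y := by linarith
  have key : ∀ k, Tsum x y k ≤ (x + y) ^ ((k + 1) / 2) ∧
      Tsum x y (k + 1) ≤ (x + y) ^ ((k + 2) / 2) := by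
    intro k
    induction k with
    | zero =>
      constructor
      · simp [Tsum_zero]
      · simpa [Tsum_one] using (by linarith : x ≤ x + y)
    | succ n ih =>
      obtain ⟨ih1, ih2⟩ := ih
      refine ⟨ih2, ?_⟩
      rw [Tsum_rec]
      have e1 : (n + 1) / 2 ≤ (n + 2) / 2 := by omega
      have hpow : (x + y) ^ ((n + 2) / 2) ≤ (x + y) ^ ((n + 1) / 2) :=
        pow_le_pow_of_le_one hs0 hs e1
      have h1 : x * Tsum x y (n + 1) ≤ x * (x + y) ^ ((n + 1) / 2) :=
        mul_le_mul_of_nonneg_left (le_trans ih2 hpow) hx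
      have h2 : y * Tsum x y n ≤ y * (x + y) ^ ((n + 1) / 2) :=
        mul_le_mul_of_nonneg_left ih1 hy
      have e2 : (n + 1 + 1 + 1) / 2 = (n + 1) / 2 + 1 := by omega
      rw [e2, pow_succ]
      calc x * Tsum x y (n + 1) + y * Tsum x y n
          ≤ x * (x + y) ^ ((n + 1) / 2) + y * (x + y) ^ ((n + 1) / 2) := by linarith
        _ = (x + y) ^ ((n + 1) / 2) * (x + y) := by ring
  intro k
  exact (key k).1

lemma sum_eq_Tsum (x y : ℝ) (k : ℕ) :
    ∑ h' ∈ Finset.Icc ((k + 1) / 2) k,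
      (Nat.choose h' (k - h') : ℝ) * x ^ (2 * h' - k) * y ^ (k - h') = Tsum x y k := by
  have hsub : Finset.Icc ((k + 1) / 2) k ⊆ Finset.range (k + 1) := by
    intro a ha
    simp only [Finset.mem_Icc] at ha
    simp only [Finset.mem_range]
    omega
  have hzero : ∀ a ∈ Finset.range (k + 1), a ∉ Finset.Icc ((k + 1) / 2) k →
      (Nat.choose a (k - a) : ℝ) * x ^ (2 * a - k) * y ^ (k - a) = 0 := by
    intro a ha hna
    simp only [Finset.mem_range] at ha
    simp only [Finset.mem_Icc, not_and, not_le] at hna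
    have : Nat.choose a (k - a) = 0 := Nat.choose_eq_zero_of_lt (by omega)
    simp [this]
  rw [Finset.sum_subset hsub hzero]
  unfold Tsum
  apply Finset.sum_nbij' (fun h' => k - h') (fun j => k - j)
  · intro a ha; simp only [Finset.mem_range] at *; omega
  · intro a ha; simp only [Finset.mem_range] at *; omega
  · intro a ha; simp only [Finset.mem_range] at ha; omega
  · intro a ha; simp only [Finset.mem_range] at ha; omega
  · intro a ha
    simp only [Finset.mem_range] at ha
    have e1 : k - (k - a) = a := by omega
    have e2 : k - 2 * (k - a) = 2 * a - k := by omega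
    rw [e1, e2]

theorem second_order_coefficient_bound (ρ₁ ρ₂ : ℝ) (h : |ρ₁| + |ρ₂| < 1) :
    ∀ k : ℕ, 2 ≤ k →
      ∑ h' ∈ Finset.Icc ((k + 1) / 2) k,
        (Nat.choose h' (k - h') : ℝ) * |ρ₁| ^ (2 * h' - k) * |ρ₂| ^ (k - h') ≤
      (|ρ₁| + |ρ₂|) ^ ((k + 1) / 2) := by
  intro k hk
  rw [sum_eq_Tsum]
  exact Tsum_bound _ _ (abs_nonneg _) (abs_nonneg _) (le_of_lt h) k
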